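/- arXiv:1208.6220 — 3 statements merged into one kernel-verified Lean document; each statement's English description precedes it below -/
import Mathlib

section
/- The rational point P = (1, 1) on the elliptic curve y^2 = x^3 - x + 1 has infinite order. -/
/-!
Write `|·|` for the 2-adic norm. On a curve `y² = x³ + a₄x + a₆` with `|a₄|, |a₆| ≤ 1`, a point
with `|x| = t² > 1` has `|y| = t³`, and its tangent slope `(3x² + a₄) / 2y` has norm `2t`, so the
double of the point has `|x| = (2t)²`. Since `6P = (1/4, 7/8)`, the points `2ᵏ • 6P` have
x-coordinates of norm `4ᵏ⁺¹`; they are therefore pairwise distinct, which is impossible if `P` has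
finite order.
-/

/-- The elliptic curve `y² = x³ - x + 1` over `ℚ`. -/
def E6 : WeierstrassCurve.Affine ℚ :=
  { a₁ := 0, a₂ := 0, a₃ := 0, a₄ := -1, a₆ := 1 }

open Function WeierstrassCurve WeierstrassCurve.Affine Point IsAbsoluteValue

theorem not_isOfFinAddOrder_of_injective_nsmul_comp {G : Type*} [AddLeftCancelMonoid G] {a : G}
    {f : ℕ → ℕ} (hf : Injective fun k ↦ f k • a) : ¬IsOfFinAddOrder a :=
  infinite_multiples.1 <| Set.infinite_of_injective_forall_mem hf fun k ↦ ⟨f k, rfl⟩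

theorem padicNorm_add_eq_left {p : ℕ} [Fact p.Prime] {q r : ℚ}
    (h : padicNorm p r < padicNorm p q) : padicNorm p (q + r) = padicNorm p q := by
  rw [padicNorm.add_eq_max_of_ne h.ne', max_eq_left h.le]

theorem padicNorm_two_two : padicNorm 2 (2 : ℚ) = 1 / 2 := by
  simpa using padicNorm.padicNorm_p_of_prime (p := 2)

theorem padicNorm_two_three : padicNorm 2 (3 : ℚ) = 1 := by
  simpa using padicNorm.nat_eq_one_iff (p := 2) 3

namespace WeierstrassCurve.Affine

variable {W : WeierstrassCurve.Affine ℚ}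

def Point.padicNormX (p : ℕ) : W.Point → ℚ
  | zero => 0
  | some x _ _ => padicNorm p x

variable [W.IsShortNF]

theorem negY_of_isShortNF (x y : ℚ) : W.negY x y = -y := by
  simp [negY]

theorem padicNorm_Y_of_equation (ha₄ : padicNorm 2 W.a₄ ≤ 1) (ha₆ : padicNorm 2 W.a₆ ≤ 1)
    {x y t : ℚ} (h : W.Equation x y) (ht : 1 < t) (hx : padicNorm 2 x = t ^ 2) :
    padicNorm 2 y = t ^ 3 := by
  rw [equation_iff, a₁_of_isShortNF, a₂_of_isShortNF, a₃_of_isShortNF] at h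
  have hcurve : y ^ 2 = x ^ 3 + (W.a₄ * x + W.a₆) := by linear_combination h
  have hlow : padicNorm 2 (W.a₄ * x + W.a₆) < padicNorm 2 (x ^ 3) := by
    calc padicNorm 2 (W.a₄ * x + W.a₆)
        ≤ max (padicNorm 2 W.a₄ * padicNorm 2 x) (padicNorm 2 W.a₆) := by
          rw [← padicNorm.mul]; exact padicNorm.nonarchimedean
      _ ≤ t ^ 2 := by
          rw [hx]; exact max_le (by nlinarith [padicNorm.nonneg (p := 2) W.a₄]) (by nlinarith)
      _ < padicNorm 2 (x ^ 3) := by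
          rw [abv_pow (padicNorm 2), hx]
          nlinarith [pow_lt_pow_right₀ ht (by norm_num : 2 < 6)]
  have : padicNorm 2 y ^ 2 = (t ^ 3) ^ 2 := by
    rw [← abv_pow (padicNorm 2), hcurve, padicNorm_add_eq_left hlow, abv_pow (padicNorm 2), hx]
    ring
  exact (pow_left_inj₀ (padicNorm.nonneg _) (by positivity) two_ne_zero).1 this

theorem padicNormX_add_self (ha₄ : padicNorm 2 W.a₄ ≤ 1) (ha₆ : padicNorm 2 W.a₆ ≤ 1)
    {Q : W.Point} {t : ℚ} (ht : 1 < t) (hQ : Q.padicNormX 2 = t ^ 2) :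
    (Q + Q).padicNormX 2 = (2 * t) ^ 2 := by
  rcases Q with _ | ⟨x, y, h⟩
  · simp only [Point.padicNormX] at hQ; nlinarith
  simp only [Point.padicNormX] at hQ
  have hy := padicNorm_Y_of_equation ha₄ ha₆ h.1 ht hQ
  have hy' : y ≠ W.negY x y := by
    rw [negY_of_isShortNF]
    rintro hy0
    obtain rfl : y = 0 := by linarith
    rw [padicNorm.zero] at hy
    nlinarith [pow_pos (zero_lt_one.trans ht) 3]
  have h3x2 : padicNorm 2 (3 * x ^ 2) = t ^ 4 := by
    rw [padicNorm.mul, abv_pow (padicNorm 2), hQ, padicNorm_two_three]; ring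
  have hnum : padicNorm 2 (3 * x ^ 2 + W.a₄) = t ^ 4 := by
    rw [padicNorm_add_eq_left (h3x2 ▸ ha₄.trans_lt (one_lt_pow₀ ht (by norm_num))), h3x2]
  have hslope : padicNorm 2 (W.slope x x y y) = 2 * t := by
    rw [slope_of_Y_ne rfl hy', negY_of_isShortNF, a₁_of_isShortNF, a₂_of_isShortNF,
      show 3 * x ^ 2 + 2 * 0 * x + W.a₄ - 0 * y = 3 * x ^ 2 + W.a₄ by ring,
      show y - -y = 2 * y by ring, padicNorm.div, padicNorm.mul, hnum, hy, padicNorm_two_two]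
    field_simp
  have h2x : padicNorm 2 (-2 * x) = t ^ 2 / 2 := by
    rw [padicNorm.mul, padicNorm.neg, padicNorm_two_two, hQ]; ring
  have hslope2 : padicNorm 2 (W.slope x x y y ^ 2) = (2 * t) ^ 2 := by
    rw [abv_pow (padicNorm 2), hslope]
  rw [add_self_of_Y_ne hy']
  simp only [Point.padicNormX]
  rw [addX, a₁_of_isShortNF, a₂_of_isShortNF, show ∀ ℓ : ℚ, ℓ ^ 2 + 0 * ℓ - 0 - x - x =
    ℓ ^ 2 + -2 * x from fun ℓ ↦ by ring,
    padicNorm_add_eq_left (by rw [hslope2, h2x]; nlinarith), hslope2]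

end WeierstrassCurve.Affine

instance : E6.IsShortNF := ⟨rfl, rfl, rfl⟩

instance : E6.IsElliptic := ⟨by norm_num [E6, Δ, b₂, b₄, b₆, b₈]⟩

theorem E6_nonsingular_of_eq {x y : ℚ} (h : y ^ 2 = x ^ 3 - x + 1) : E6.Nonsingular x y :=
  equation_iff_nonsingular.1 <| (equation_iff x y).2 <| by simp only [E6]; linear_combination h

theorem six_nsmul_some_one_one (h : E6.Nonsingular 1 1) :
    6 • some 1 1 h = some (1 / 4) (7 / 8) (E6_nonsingular_of_eq (by norm_num)) := by
  have h₂ := E6_nonsingular_of_eq (x := -1) (y := 1) (by norm_num)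
  have h₃ := E6_nonsingular_of_eq (x := 0) (y := -1) (by norm_num)
  have double : some 1 1 h + some 1 1 h = some _ _ h₂ := by
    rw [add_self_of_Y_ne (by norm_num [negY, E6]), some.injEq]
    norm_num [addX, addY, negAddY, negY, Affine.slope, E6]
  have triple : some _ _ h₂ + some 1 1 h = some _ _ h₃ := by
    rw [add_of_X_ne (by norm_num), some.injEq]
    norm_num [addX, addY, negAddY, negY, Affine.slope, E6]
  have sextuple : some _ _ h₃ + some _ _ h₃ =
      some (1 / 4) (7 / 8) (E6_nonsingular_of_eq (by norm_num)) := by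
    rw [add_self_of_Y_ne (by norm_num [negY, E6]), some.injEq]
    norm_num [addX, addY, negAddY, negY, Affine.slope, E6]
  rw [show 6 = 3 + 3 from rfl, add_nsmul, succ_nsmul, two_nsmul, double, triple, sextuple]

theorem padicNormX_two_pow_mul_six_nsmul (h : E6.Nonsingular 1 1) (k : ℕ) :
    ((2 ^ k * 6) • some 1 1 h).padicNormX 2 = (2 ^ (k + 1)) ^ 2 := by
  induction k with
  | zero =>
    rw [pow_zero, one_mul, six_nsmul_some_one_one, padicNormX, padicNorm.div, padicNorm.one,
      show (4 : ℚ) = 2 ^ 2 by norm_num, abv_pow (padicNorm 2), padicNorm_two_two]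
    norm_num
  | succ k ih =>
    rw [show 2 ^ (k + 1) * 6 = 2 ^ k * 6 + 2 ^ k * 6 by ring, add_nsmul,
      padicNormX_add_self (by norm_num [E6]) (by norm_num [E6])
        (one_lt_pow₀ one_lt_two k.succ_ne_zero) ih, pow_succ' 2 (k + 1)]

/-- The point `(1, 1)` on `y² = x³ - x + 1` has infinite order. -/
theorem stmt_6 (h : E6.Nonsingular 1 1) :
    ∀ n : ℕ, 0 < n → n • (WeierstrassCurve.Affine.Point.some 1 1 h) ≠ 0 := by
  have hinj : Injective fun k : ℕ ↦ (2 ^ k * 6) • some 1 1 h := fun j k hjk ↦ by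
    have := congrArg (padicNormX 2) hjk
    simp only [padicNormX_two_pow_mul_six_nsmul] at this
    rw [pow_left_inj₀ (by positivity) (by positivity) two_ne_zero,
      pow_right_inj₀ two_pos (by norm_num)] at this
    omega
  intro n hn hnP
  exact not_isOfFinAddOrder_of_injective_nsmul_comp hinj
    (isOfFinAddOrder_iff_nsmul_eq_zero.2 ⟨n, hn, hnP⟩)
end

section
/- The only integers t such that there exists a rational y with y^2 (t + 1) = t^3 + 2t^2 + t + 1 are t = -2, t = 0, and t = 3. -/
lemma sq_gap_aux (a z : ℤ) (h0 : 0 ≤ a) (h1 : a ^ 2 < z ^ 2) (h2 : z ^ 2 < (a + 1) ^ 2) :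
    False := by
  have hz : a < |z| := by
    have h1' : a ^ 2 < |z| ^ 2 := by rwa [sq_abs]
    exact lt_of_pow_lt_pow_left₀ 2 (abs_nonneg z) h1'
  have h3 : (a + 1) ^ 2 ≤ |z| ^ 2 := pow_le_pow_left₀ (by omega) (by omega) 2
  rw [sq_abs] at h3
  linarith

lemma rat_sq_int (q : ℚ) (n : ℤ) (h : q ^ 2 = (n : ℚ)) : ∃ z : ℤ, z ^ 2 = n := by
  have hden : (q ^ 2).den = 1 := by rw [h]; exact Rat.den_intCast n
  rw [Rat.den_pow] at hden
  have hq : q.den = 1 := by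
    have hpos := q.pos
    nlinarith
  refine ⟨q.num, ?_⟩
  have hq' : (q.num : ℚ) = q := (Rat.den_eq_one_iff q).mp hq
  have : ((q.num ^ 2 : ℤ) : ℚ) = (n : ℚ) := by push_cast; rw [hq']; exact h
  exact_mod_cast this

theorem stmt_9 (t : ℤ) :
    (∃ y : ℚ, y ^ 2 * ((t : ℚ) + 1) = (t : ℚ) ^ 3 + 2 * (t : ℚ) ^ 2 + (t : ℚ) + 1) ↔
      t = -2 ∨ t = 0 ∨ t = 3 := by
  constructor
  · rintro ⟨y, hy⟩
    have ht : t ≠ -1 := by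
      rintro rfl
      norm_num at hy
    have hq : (y * ((t : ℚ) + 1)) ^ 2 = ((t ^ 4 + 3 * t ^ 3 + 3 * t ^ 2 + 2 * t + 1 : ℤ) : ℚ) := by
      push_cast
      linear_combination ((t : ℚ) + 1) * hy
    obtain ⟨z, hz⟩ := rat_sq_int _ _ hq
    by_contra hcon
    push_neg at hcon
    obtain ⟨h2, h0, h3⟩ := hcon
    rcases lt_or_ge t (-2) with hlt | hge
    · -- t ≤ -3
      have ha : (0 : ℤ) ≤ 2 * t ^ 2 + 3 * t := by nlinarith
      exact sq_gap_aux (2 * t ^ 2 + 3 * t) (2 * z) ha (by nlinarith) (by nlinarith)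
    rcases lt_or_ge 3 t with hgt | hle
    · -- t ≥ 4
      have ha : (0 : ℤ) ≤ 2 * t ^ 2 + 3 * t := by nlinarith
      exact sq_gap_aux (2 * t ^ 2 + 3 * t) (2 * z) ha (by nlinarith) (by nlinarith)
    · interval_cases t <;> simp_all <;>
        · have hb : -8 ≤ z ∧ z ≤ 8 := by constructor <;> nlinarith
          obtain ⟨hb1, hb2⟩ := hb
          interval_cases z <;> omega
  · rintro (rfl | rfl | rfl)
    · exact ⟨1, by norm_num⟩
    · exact ⟨1, by norm_num⟩
    · exact ⟨7 / 2, by norm_num⟩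
end

section
/- If f(x) = x^2 + c with c an integer, c > 0, then for every m ≥ 2, f^m(0) > f(0) · f^2(0) · ... · f^{m-1}(0), where f^k denotes the k-th iterate. -/
/-!
Write `a k = f^k(0)` and `P m = a 1 ⋯ a (m - 1)`. Every `a k` with `k ≥ 1` is positive, and
`P 2 = c < c ^ 2 + c = a 2`. Inductively, `P (m + 1) = P m * a m < a m ^ 2 < a m ^ 2 + c = a (m + 1)`.
-/

section SqAddIterate

variable {R : Type*} [CommRing R] [LinearOrder R] [IsStrictOrderedRing R] {c : R}

lemma iterate_sq_add_pos (hc : 0 < c) {n : ℕ} (hn : n ≠ 0) :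
    0 < (fun x : R => x ^ 2 + c)^[n] 0 := by
  obtain ⟨k, rfl⟩ := Nat.exists_eq_succ_of_ne_zero hn
  rw [Function.iterate_succ_apply']
  positivity

lemma prod_Ico_iterate_sq_add_lt (hc : 0 < c) {m : ℕ} (hm : 2 ≤ m) :
    ∏ k ∈ Finset.Ico 1 m, (fun x : R => x ^ 2 + c)^[k] 0 < (fun x : R => x ^ 2 + c)^[m] 0 := by
  set a : ℕ → R := fun k => (fun x : R => x ^ 2 + c)^[k] 0
  have a_succ (k : ℕ) : a (k + 1) = a k ^ 2 + c := Function.iterate_succ_apply' _ _ _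
  change ∏ k ∈ Finset.Ico 1 m, a k < a m
  induction m, hm using Nat.le_induction with
  | base =>
    have a_one : a 1 = c := by simp [a]
    rw [show Finset.Ico 1 2 = {1} from rfl, Finset.prod_singleton, a_succ 1, a_one]
    exact lt_add_of_pos_left c (by positivity)
  | succ n hn ih =>
    have ha_pos : 0 < a n := iterate_sq_add_pos hc (by omega)
    calc ∏ k ∈ Finset.Ico 1 (n + 1), a k
        = (∏ k ∈ Finset.Ico 1 n, a k) * a n := Finset.prod_Ico_succ_top (by omega) _
      _ < a n * a n := mul_lt_mul_of_pos_right ih ha_pos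
      _ < a n ^ 2 + c := by rw [← sq]; exact lt_add_of_pos_right _ hc
      _ = a (n + 1) := (a_succ n).symm

end SqAddIterate

theorem stmt_17 (c : ℤ) (hc : 0 < c) (m : ℕ) (hm : 2 ≤ m) :
    ∏ k ∈ Finset.Ico 1 m, (fun x : ℤ => x ^ 2 + c)^[k] 0 <
      (fun x : ℤ => x ^ 2 + c)^[m] 0 :=
  prod_Ico_iterate_sq_add_lt hc hm
end
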